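/- Let $G$ be the graph on vertices $x_1,\ldots,x_8$ obtained from the cycle $C_7$ on $x_1,\ldots,x_7$ by adding the pendant edge $\{x_1,x_8\}$, and let $\mathfrak{c} = (2,3,1,1,2,1,1,2)$. Then $\delta_{\mathfrak{c}}(I(G)) = 5$, the monomials $w_1 = (x_1x_8)^2(x_2x_3)(x_4x_5)(x_5x_6)$ and $w_2 = (x_1x_2)^2(x_2x_3)(x_4x_5)(x_6x_7)$ belong to $\mathcal{W}(\mathfrak{c},G)$, $\deg_{x_5}(w_1) > \deg_{x_5}(w_2)$, $\deg_{x_2}(w_1) < \deg_{x_2}(w_2)$, but $x_2 w_1/x_5 \notin \mathcal{W}(\mathfrak{c},G)$. Hence $G$ does not enjoy the strong exchange property. -/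
import Mathlib


open Finset

/-- A monomial with exponent vector `a` belongs to the `q`-th power of the edge ideal of `G`:
it is divisible by a product of `q` edges of `G`. -/
def memPow {n : ℕ} (G : SimpleGraph (Fin n)) (q : ℕ) (a : Fin n → ℕ) : Prop :=
  ∃ e : Fin q → Fin n × Fin n, (∀ i, G.Adj (e i).1 (e i).2) ∧
    ∀ j, (∑ i, ((if (e i).1 = j then 1 else 0) + (if (e i).2 = j then 1 else 0))) ≤ a j

/-- The exponent vector `a` is componentwise bounded by `c`. -/
def bdd {n : ℕ} (c a : Fin n → ℕ) : Prop := ∀ i, a i ≤ c i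

/-- `δ_c(I(G))`: the largest `q` such that `(I(G)^q)_c ≠ 0`, i.e. such that some
`c`-bounded monomial lies in `I(G)^q`. -/
noncomputable def deltaC {n : ℕ} (G : SimpleGraph (Fin n)) (c : Fin n → ℕ) : ℕ :=
  sSup {q | ∃ a, bdd c a ∧ memPow G q a}

/-- `W(c,G)`: the minimal monomial generators of `(I(G)^{δ_c(I(G))})_c`, i.e. the
`c`-bounded monomials of `I(G)^{δ_c}` that are minimal with respect to divisibility. -/
def genW {n : ℕ} (G : SimpleGraph (Fin n)) (c : Fin n → ℕ) : Set (Fin n → ℕ) :=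
  {a | bdd c a ∧ memPow G (deltaC G c) a ∧
    ∀ b, bdd a b → memPow G (deltaC G c) b → b = a}

/-- The monomial `x_ρ · u / x_ξ`. -/
def exch {n : ℕ} (u : Fin n → ℕ) (ξ ρ : Fin n) : Fin n → ℕ :=
  fun i => if i = ρ then u i + 1 else if i = ξ then u i - 1 else u i

/-- `W(c,G)` enjoys the strong exchange property. -/
def SEPc {n : ℕ} (G : SimpleGraph (Fin n)) (c : Fin n → ℕ) : Prop :=
  ∀ u ∈ genW G c, ∀ v ∈ genW G c, ∀ ξ ρ : Fin n, v ξ < u ξ → u ρ < v ρ →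
    exch u ξ ρ ∈ genW G c

/-- The graph `G` enjoys the strong exchange property: `W(c,G)` does, for every
`c ∈ ℤ_{>0}^n`. -/
def SEP {n : ℕ} (G : SimpleGraph (Fin n)) : Prop :=
  ∀ c : Fin n → ℕ, (∀ i, 0 < c i) → SEPc G c

/-- The cycle graph on `Fin m`. -/
def cycleG (m : ℕ) : SimpleGraph (Fin m) :=
  SimpleGraph.fromRel (fun i j => (i.val + 1) % m = j.val)

/-- The path graph on `Fin m`. -/
def pathG (m : ℕ) : SimpleGraph (Fin m) :=
  SimpleGraph.fromRel (fun i j => i.val + 1 = j.val)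

/-- A set of monomials is of Veronese type: it equals `w · V^{(d)}(a)`, the set of
translates by a fixed monomial `w` of all monomials of degree `d` componentwise
bounded by `a`. -/
def IsVeronese {n : ℕ} (S : Set (Fin n → ℕ)) : Prop :=
  ∃ (w : Fin n → ℕ) (d : ℕ) (a : Fin n → ℕ), d ≤ ∑ i, a i ∧
    S = {u | ∃ v : Fin n → ℕ, (∀ i, v i ≤ a i) ∧ (∑ i, v i) = d ∧
      u = fun i => w i + v i}

/-- The graph on `Fin m` with edges given by a list of (0-based) pairs. -/
def listGraph (m : ℕ) (E : List (ℕ × ℕ)) : SimpleGraph (Fin m) :=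
  SimpleGraph.fromRel (fun i j => (i.val, j.val) ∈ E)

/-- The cycle `C₇` on vertices `0,…,6` with a pendant edge `{0,7}`. -/
def G15 : SimpleGraph (Fin 8) :=
  listGraph 8 [(0,1),(1,2),(2,3),(3,4),(4,5),(5,6),(0,6),(0,7)]

instance : DecidableRel G15.Adj := fun u v =>
  decidable_of_iff _ (SimpleGraph.fromRel_adj (fun i j : Fin 8 =>
    (i.val, j.val) ∈ [(0,1),(1,2),(2,3),(3,4),(4,5),(5,6),(0,6),(0,7)]) u v).symm

lemma weight_bound {n : ℕ} (G : SimpleGraph (Fin n)) (z a : Fin n → ℕ) (q : ℕ)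
    (hz : ∀ u v, G.Adj u v → 2 ≤ z u + z v) (h : memPow G q a) :
    2 * q ≤ ∑ j, z j * a j := by
  obtain ⟨e, hadj, hdeg⟩ := h
  have key : ∀ i : Fin q, z (e i).1 + z (e i).2
      = ∑ j, z j * ((if (e i).1 = j then 1 else 0) + (if (e i).2 = j then 1 else 0)) := by
    intro i
    simp [mul_add, Finset.sum_add_distrib, mul_ite, mul_one, mul_zero, Finset.sum_ite_eq]
  calc 2 * q = ∑ _i : Fin q, 2 := by simp [mul_comm]
    _ ≤ ∑ i : Fin q, (z (e i).1 + z (e i).2) :=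
        Finset.sum_le_sum fun i _ => hz _ _ (hadj i)
    _ = ∑ i : Fin q, ∑ j, z j * ((if (e i).1 = j then 1 else 0) + (if (e i).2 = j then 1 else 0)) := by
        simp only [key]
    _ = ∑ j, ∑ i : Fin q, z j * ((if (e i).1 = j then 1 else 0) + (if (e i).2 = j then 1 else 0)) :=
        Finset.sum_comm
    _ = ∑ j, z j * ∑ i : Fin q, ((if (e i).1 = j then 1 else 0) + (if (e i).2 = j then 1 else 0)) := by
        simp [Finset.mul_sum]
    _ ≤ ∑ j, z j * a j := Finset.sum_le_sum fun j _ => Nat.mul_le_mul_left _ (hdeg j)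

lemma deg_bound {n : ℕ} (G : SimpleGraph (Fin n)) (a : Fin n → ℕ) (q : ℕ)
    (h : memPow G q a) : 2 * q ≤ ∑ j, a j := by
  have := weight_bound G (fun _ => 1) a q (fun _ _ _ => le_refl 2) h
  simpa using this

/-- With `c = (2,3,1,1,2,1,1,2)`: `δ_c(I(G)) = 5`,
`w₁ = (x₁x₈)²(x₂x₃)(x₄x₅)(x₅x₆)` and `w₂ = (x₁x₂)²(x₂x₃)(x₄x₅)(x₆x₇)` lie in `W(c,G)`,
`deg_{x₅} w₁ > deg_{x₅} w₂`, `deg_{x₂} w₁ < deg_{x₂} w₂`, but `x₂ w₁ / x₅ ∉ W(c,G)`;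
hence `G` does not enjoy the strong exchange property. -/
theorem stmt15 :
    IsGreatest {q | ∃ a, bdd (![2,3,1,1,2,1,1,2] : Fin 8 → ℕ) a ∧ memPow G15 q a} 5 ∧
    (![2,1,1,1,2,1,0,2] : Fin 8 → ℕ) ∈ genW G15 ![2,3,1,1,2,1,1,2] ∧
    (![2,3,1,1,1,1,1,0] : Fin 8 → ℕ) ∈ genW G15 ![2,3,1,1,2,1,1,2] ∧
    (![2,3,1,1,1,1,1,0] : Fin 8 → ℕ) 4 < (![2,1,1,1,2,1,0,2] : Fin 8 → ℕ) 4 ∧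
    (![2,1,1,1,2,1,0,2] : Fin 8 → ℕ) 1 < (![2,3,1,1,1,1,1,0] : Fin 8 → ℕ) 1 ∧
    exch (![2,1,1,1,2,1,0,2] : Fin 8 → ℕ) 4 1 ∉ genW G15 ![2,3,1,1,2,1,1,2] ∧
    ¬ SEP G15 := by
  set c : Fin 8 → ℕ := ![2,3,1,1,2,1,1,2] with hc
  set w1 : Fin 8 → ℕ := ![2,1,1,1,2,1,0,2] with hw1
  set w2 : Fin 8 → ℕ := ![2,3,1,1,1,1,1,0] with hw2
  have hm1 : memPow G15 5 w1 :=
    ⟨![(0,7),(0,7),(1,2),(3,4),(4,5)], by decide, by decide⟩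
  have hm2 : memPow G15 5 w2 :=
    ⟨![(0,1),(0,1),(1,2),(3,4),(5,6)], by decide, by decide⟩
  have hzG : ∀ u v : Fin 8, G15.Adj u v →
      2 ≤ (![2,0,2,2,0,2,0,0] : Fin 8 → ℕ) u + ![2,0,2,2,0,2,0,0] v := by decide
  have hgreat : IsGreatest {q | ∃ a, bdd c a ∧ memPow G15 q a} 5 := by
    constructor
    · exact ⟨w1, fun i => by fin_cases i <;> decide, hm1⟩
    · rintro q ⟨a, hba, hma⟩
      have h1 := weight_bound G15 ![2,0,2,2,0,2,0,0] a q hzG hma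
      have h2 : ∑ j, (![2,0,2,2,0,2,0,0] : Fin 8 → ℕ) j * a j
          ≤ ∑ j, (![2,0,2,2,0,2,0,0] : Fin 8 → ℕ) j * c j :=
        Finset.sum_le_sum fun j _ => Nat.mul_le_mul_left _ (hba j)
      have h4 : 2 * q ≤ 10 := h1.trans (h2.trans_eq (by decide))
      omega
  have hdelta : deltaC G15 c = 5 := by
    rw [deltaC]; exact hgreat.csSup_eq
  -- generic minimality
  have hmin : ∀ w : Fin 8 → ℕ, (∑ j, w j) = 10 →
      ∀ b, bdd w b → memPow G15 5 b → b = w := by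
    intro w hsw b hb hmb
    have h1 := deg_bound G15 b 5 hmb
    have h2 : ∑ j, b j ≤ ∑ j, w j := Finset.sum_le_sum fun j _ => hb j
    have h3 : ∑ j, b j = ∑ j, w j := by omega
    funext i
    exact (Finset.sum_eq_sum_iff_of_le fun j _ => hb j).mp h3 i (Finset.mem_univ i)
  have hw1g : w1 ∈ genW G15 c := by
    refine ⟨fun i => by fin_cases i <;> decide, ?_, ?_⟩
    · rw [hdelta]; exact hm1
    · rw [hdelta]; exact hmin w1 (by decide)
  have hw2g : w2 ∈ genW G15 c := by
    refine ⟨fun i => by fin_cases i <;> decide, ?_, ?_⟩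
    · rw [hdelta]; exact hm2
    · rw [hdelta]; exact hmin w2 (by decide)
  have hexch : exch w1 4 1 ∉ genW G15 c := by
    rintro ⟨-, hm, -⟩
    rw [hdelta] at hm
    have h1 := weight_bound G15 ![2,0,2,0,2,0,2,0] (exch w1 4 1) 5
      (by decide) hm
    have h2 : 2 * 5 ≤ 8 := h1.trans_eq (by decide)
    omega
  refine ⟨hgreat, hw1g, hw2g, by decide, by decide, hexch, ?_⟩
  intro hSEP
  exact hexch (hSEP c (by decide) w1 hw1g w2 hw2g 4 1 (by decide) (by decide))
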